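/- arXiv:2201.02370 — 2 statements merged into one kernel-verified Lean document; each statement's English description precedes it below -/
import Mathlib

section
/- Let d ≥ 1 and let Q ⊆ ℝ^d be a non-empty, convex, open, bounded set. Then there exists a linear bijection Ψ : ℝ^d → ℝ^d such that τ_d / (2^d d^d) ≤ |Ψ(Q)| / (diam Ψ(Q))^d ≤ τ_d / 2^{d/2}. -/
open MeasureTheory Real Set
open scoped BigOperators ENNReal RealInnerProductSpace

noncomputable section

/-- Physicists' Hermite polynomials `H_n`, via the recursion
`H_0 = 1`, `H_{n+1}(x) = 2 x H_n(x) - H_n'(x)`. -/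
def physHermite : ℕ → Polynomial ℝ
  | 0 => 1
  | n + 1 => 2 * Polynomial.X * physHermite n - Polynomial.derivative (physHermite n)

/-- The `L²`-normalized Hermite functions on `ℝ`:
`h_n(t) = (2^n n! √π)^{-1/2} H_n(t) e^{-t²/2}`. -/
def hermiteFun (n : ℕ) (t : ℝ) : ℝ :=
  ((2 : ℝ) ^ n * (n.factorial : ℝ) * Real.sqrt π) ^ (-(1 : ℝ) / 2) *
    (physHermite n).eval t * Real.exp (-t ^ 2 / 2)

/-- The tensor Hermite function `Φ_α(y) = ∏_j h_{α_j}(y_j)` on `ℝ^{d₁}`. -/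
def hermiteProd {d₁ : ℕ} (α : Fin d₁ → ℕ) (y : EuclideanSpace ℝ (Fin d₁)) : ℝ :=
  ∏ j, hermiteFun (α j) (y j)

/-- `g : ℝ^n → ℂ` has Fourier transform (convention `ĝ(ξ) = c ∫ g(x) e^{-i x·ξ} dx`)
supported in the closed Euclidean ball of radius `r`:  `g` is pointwise the inverse
Fourier integral of a square-integrable function vanishing outside that ball. -/
def Bandlimited {n : ℕ} (r : ℝ) (g : EuclideanSpace ℝ (Fin n) → ℂ) : Prop :=
  ∃ F : EuclideanSpace ℝ (Fin n) → ℂ,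
    MemLp F 2 volume ∧
    (∀ ξ, ξ ∉ Metric.closedBall (0 : EuclideanSpace ℝ (Fin n)) r → F ξ = 0) ∧
    ∀ z, g z = ∫ ξ, F ξ * Complex.exp (Complex.I * ((inner ℝ ξ z : ℝ) : ℂ))

/-- The first `d₁` coordinates of a point of `ℝ^{d₁+d₂}`. -/
def fstC (d₁ d₂ : ℕ) (x : EuclideanSpace ℝ (Fin (d₁ + d₂))) : EuclideanSpace ℝ (Fin d₁) :=
  WithLp.toLp 2 (fun i => x (Fin.castAdd d₂ i))

/-- The last `d₂` coordinates of a point of `ℝ^{d₁+d₂}`. -/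
def sndC (d₁ d₂ : ℕ) (x : EuclideanSpace ℝ (Fin (d₁ + d₂))) : EuclideanSpace ℝ (Fin d₂) :=
  WithLp.toLp 2 (fun j => x (Fin.natAdd d₁ j))

/-- Gluing `y ∈ ℝ^{d₁}` and `z ∈ ℝ^{d₂}` to the point `(y,z) ∈ ℝ^{d₁+d₂}`. -/
def glue {d₁ d₂ : ℕ} (y : EuclideanSpace ℝ (Fin d₁)) (z : EuclideanSpace ℝ (Fin d₂)) :
    EuclideanSpace ℝ (Fin (d₁ + d₂)) :=
  WithLp.toLp 2 (fun i => Fin.addCases (fun i₁ => y i₁) (fun j => z j) i : Fin (d₁ + d₂) → ℝ)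

/-- Degree `|α|` of a multiindex. -/
def mdeg {n : ℕ} (α : Fin n → ℕ) : ℕ := ∑ i, α i

/-- Factorial `α!` of a multiindex. -/
def mfact {n : ℕ} (α : Fin n → ℕ) : ℕ := ∏ i, (α i).factorial

/-- The spectral subspace `E_λ = Ran 1_{(-∞,λ]}(-Δ + |y|²)` on `L²(ℝ^{d₁+d₂})`, realized
concretely as the set of (smooth representatives of) functions of the form
`f(y,z) = Σ_{2|α|+d₁ ≤ λ} Φ_α(y) g_α(z)` with each `g_α` square-integrable with Fourier
transform supported in the closed ball of radius `(λ - 2|α| - d₁)^{1/2}`. -/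
def SpecSubspace (d₁ d₂ : ℕ) (lam : ℝ) (f : EuclideanSpace ℝ (Fin (d₁ + d₂)) → ℂ) : Prop :=
  ∃ (S : Finset (Fin d₁ → ℕ)) (g : (Fin d₁ → ℕ) → EuclideanSpace ℝ (Fin d₂) → ℂ),
    (∀ α ∈ S, 2 * (mdeg α : ℝ) + d₁ ≤ lam) ∧
    (∀ α ∈ S, Bandlimited (Real.sqrt (lam - (2 * (mdeg α : ℝ) + d₁))) (g α)) ∧
    ∀ x, f x = ∑ α ∈ S, (hermiteProd α (fstC d₁ d₂ x) : ℂ) * g α (sndC d₁ d₂ x)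

/-- The open cube `Λ_L(x) = x + (-L/2, L/2)^n`. -/
def cube {n : ℕ} (L : ℝ) (x : EuclideanSpace ℝ (Fin n)) : Set (EuclideanSpace ℝ (Fin n)) :=
  {y | ∀ i, |y i - x i| < L / 2}

/-- First-order partial derivative in coordinate `i`. -/
def pderiv1 {n : ℕ} (i : Fin n) (f : EuclideanSpace ℝ (Fin n) → ℂ) :
    EuclideanSpace ℝ (Fin n) → ℂ :=
  fun x => fderiv ℝ f x (EuclideanSpace.single i 1)

/-- Iterated partial derivatives along a list of coordinates. -/
def listDeriv {n : ℕ} : List (Fin n) → (EuclideanSpace ℝ (Fin n) → ℂ) →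
    EuclideanSpace ℝ (Fin n) → ℂ
  | [], f => f
  | i :: is, f => pderiv1 i (listDeriv is f)

/-- The partial derivative `∂^α` for a multiindex `α`. -/
def mderiv {n : ℕ} (α : Fin n → ℕ) (f : EuclideanSpace ℝ (Fin n) → ℂ) :
    EuclideanSpace ℝ (Fin n) → ℂ :=
  listDeriv ((List.finRange n).flatMap fun i => List.replicate (α i) i) f

/-- `C_B(m,λ) = 2^m ∏_{k=0}^{m-1} (λ + 2k)`. -/
def CB (m : ℕ) (lam : ℝ) : ℝ := 2 ^ m * ∏ k ∈ Finset.range m, (lam + 2 * k)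

/-- `(Q_k)_{k ∈ ι}` is an (at most countable) essential covering of `ℝ^n` by measurable
sets, of multiplicity at most `κ`. -/
def IsEssentialCovering {n : ℕ} {ι : Type*} (Q : ι → Set (EuclideanSpace ℝ (Fin n)))
    (κ : ℝ) : Prop :=
  Countable ι ∧ (∀ k, MeasurableSet (Q k)) ∧
    volume ((Set.univ : Set (EuclideanSpace ℝ (Fin n))) \ ⋃ k, Q k) = 0 ∧
    ∀ x, ∑' k, (Q k).indicator (fun _ => (1 : ℝ≥0∞)) x ≤ ENNReal.ofReal κ

/-- The set `K_c` of indices whose `Q_k` meets `B(0, Cλ^{1/2}) × ℝ^{d₂}`, where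
`C = 32 d₁ (1 + √(log κ))`. -/
def coveringCore (d₁ d₂ : ℕ) {ι : Type*} (Q : ι → Set (EuclideanSpace ℝ (Fin (d₁ + d₂))))
    (κ lam : ℝ) : Set ι :=
  {k | (Q k ∩ {x | fstC d₁ d₂ x ∈
      Metric.ball (0 : EuclideanSpace ℝ (Fin d₁))
        (32 * d₁ * (1 + Real.sqrt (Real.log κ)) * Real.sqrt lam)}).Nonempty}

/-- The set `K_g` of good indices for `f`: those `k` for which the localized
Bernstein-type inequality holds on `Q_k` for all `m ≥ 1`. -/
def goodIdx (d₁ d₂ : ℕ) {ι : Type*} (Q : ι → Set (EuclideanSpace ℝ (Fin (d₁ + d₂))))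
    (κ lam : ℝ) (f : EuclideanSpace ℝ (Fin (d₁ + d₂)) → ℂ) : Set ι :=
  {k | ∀ m : ℕ, 1 ≤ m →
    ∑ α ∈ Finset.Nat.antidiagonalTuple (d₁ + d₂) m,
        (1 / (mfact α : ℝ)) * ∫ x in Q k, ‖mderiv α f x‖ ^ 2 ≤
      2 ^ (m + 1) * κ * (CB m lam / m.factorial) * ∫ x in Q k, ‖f x‖ ^ 2}

/-- Embedding `ℝ^n ↪ ℂ^n`. -/
def cembed {n : ℕ} (x : EuclideanSpace ℝ (Fin n)) : EuclideanSpace ℂ (Fin n) :=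
  WithLp.toLp 2 (fun i => (x i : ℂ))

/-- The set `Q(x) = B(x^{(1)}, ρ(x^{(1)})) × Λ_L(x^{(2)})`. -/
def QSet (d₁ d₂ : ℕ) (ρ : EuclideanSpace ℝ (Fin d₁) → ℝ) (L : ℝ)
    (x : EuclideanSpace ℝ (Fin (d₁ + d₂))) : Set (EuclideanSpace ℝ (Fin (d₁ + d₂))) :=
  {w | fstC d₁ d₂ w ∈ Metric.ball (fstC d₁ d₂ x) (ρ (fstC d₁ d₂ x)) ∧
    sndC d₁ d₂ w ∈ cube L (sndC d₁ d₂ x)}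

/-- The operator `P g = -Σ_{j ∈ J} ∂_j² g + (Σ_{i ∈ I} x_i²) g + #(I∩J) · g`. -/
def Pop {n : ℕ} (I J : Finset (Fin n)) (f : EuclideanSpace ℝ (Fin n) → ℂ) :
    EuclideanSpace ℝ (Fin n) → ℂ :=
  fun x => -(∑ j ∈ J, pderiv1 j (pderiv1 j f) x) +
    ((∑ i ∈ I, (x i) ^ 2 : ℝ) : ℂ) * f x + ((I ∩ J).card : ℂ) * f x


/-!
Put `closure Q` in John's position. Among the affine images `u ↦ A u + c` of the closed unit
ball `B` lying in a convex body `K`, one with maximal `|det A|` exists by compactness; after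
normalising it to `B` itself, `K ⊆ n • B` with `n` the dimension, for a point `y ∈ K` with
`‖y‖ > n` would give an ellipsoid of larger volume inside the convex hull of `B ∪ {y}`. Hence
`|K| ≥ τ` and `diam K ≤ 2n`. Squashing `K` along one unit direction by the factor `τ / |K| ≤ 1`
makes the volume exactly `τ`; the squash is a contraction, so the diameter stays `≤ 2n`, and it
fixes a unit vector orthogonal to that direction (in dimension one the factor is `1`), so the
diameter stays `≥ 2`. Then `τ / (2n)^n ≤ |Ψ Q| / (diam Ψ Q)^n ≤ τ / 2^n`.
-/

open Metric Module

theorem exists_one_lt_mul_sqrt_pow {m : ℕ} {s : ℝ} (hs : (m + 1 : ℝ) < s) :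
    ∃ ε : ℝ, 0 < ε ∧ ε < 1 / 2 ∧ 1 < (1 + (s - 1) * ε) * √(1 - 2 * ε) ^ m := by
  have hm : (0 : ℝ) ≤ m := m.cast_nonneg
  have hs₀ : 0 < s := by linarith
  set ε := (s - (m + 1)) / (4 * (m + 1) * s)
  have hε₀ : 0 < ε := by apply div_pos <;> [linarith; positivity]
  have hε : 4 * (m + 1) * s * ε = s - (m + 1) := by
    simp only [ε]; field_simp
  have hmε : 4 * (m + 1) * ε < 1 := by nlinarith
  have hε4 : 4 * ε < 1 := by nlinarith
  have hbern : 1 - 2 * m * ε ≤ (1 - 2 * ε) ^ m := by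
    have h := one_add_mul_le_pow (a := -(2 * ε)) (by linarith) m
    rw [← sub_eq_add_neg] at h
    linarith
  have hsq : (√(1 - 2 * ε) ^ m) ^ 2 = (1 - 2 * ε) ^ m := by
    rw [← pow_mul, pow_mul', Real.sq_sqrt (by linarith)]
  refine ⟨ε, hε₀, by linarith, (one_lt_sq_iff₀ (mul_nonneg (by nlinarith) (by positivity))).1 ?_⟩
  rw [mul_pow, hsq]
  calc (1 : ℝ) < (1 + 2 * (s - 1) * ε) * (1 - 2 * m * ε) := by nlinarith [mul_pos hε₀ hε₀]
    _ ≤ (1 + (s - 1) * ε) ^ 2 * (1 - 2 * ε) ^ m := by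
      gcongr
      · nlinarith
      · nlinarith [sq_nonneg ((s - 1) * ε)]

section NormedSpace

variable {F : Type*} [NormedAddCommGroup F] [NormedSpace ℝ F]

def inscribedEllipsoids (K : Set F) : Set ((F →L[ℝ] F) × F) :=
  {p | MapsTo (fun u => p.1 u + p.2) (closedBall 0 1) K}

variable {K : Set F}

theorem isClosed_inscribedEllipsoids (hK : IsClosed K) : IsClosed (inscribedEllipsoids K) := by
  have : inscribedEllipsoids K = ⋂ u ∈ closedBall (0 : F) 1, {p | p.1 u + p.2 ∈ K} := by
    ext p; simp [inscribedEllipsoids, MapsTo]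
  rw [this]
  exact isClosed_biInter fun u _ => hK.preimage (by fun_prop)

theorem isBounded_inscribedEllipsoids (hK : Bornology.IsBounded K) :
    Bornology.IsBounded (inscribedEllipsoids K) := by
  obtain ⟨R, hR⟩ := hK.exists_norm_le
  refine isBounded_iff_forall_norm_le.2 ⟨2 * R, fun p hp => ?_⟩
  have hc : ‖p.2‖ ≤ R := by simpa using hR _ (hp (mem_closedBall_self zero_le_one))
  have hA : ‖p.1‖ ≤ 2 * R := by
    refine p.1.opNorm_le_of_unit_norm (by linarith [norm_nonneg p.2]) fun u hu => ?_
    have := hR _ (hp (mem_closedBall_zero_iff.2 hu.le))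
    calc ‖p.1 u‖ = ‖(p.1 u + p.2) - p.2‖ := by rw [add_sub_cancel_right]
      _ ≤ ‖p.1 u + p.2‖ + ‖p.2‖ := norm_sub_le _ _
      _ ≤ 2 * R := by linarith
  exact max_le hA (by linarith [norm_nonneg p.2])

theorem exists_isMaxOn_abs_det [FiniteDimensional ℝ F] (hK : IsCompact K)
    (hK' : (interior K).Nonempty) :
    ∃ p ∈ inscribedEllipsoids K,
      p.1.det ≠ 0 ∧ IsMaxOn (fun q => |q.1.det|) (inscribedEllipsoids K) p := by
  obtain ⟨x, hx⟩ := hK'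
  obtain ⟨r, hr, hxr⟩ := nhds_basis_closedBall.mem_iff.1 (mem_interior_iff_mem_nhds.1 hx)
  have hball : (r • ContinuousLinearMap.id ℝ F, x) ∈ inscribedEllipsoids K := fun u hu => by
    apply hxr
    rw [mem_closedBall_zero_iff] at hu
    simpa [dist_eq_norm, norm_smul, abs_of_pos hr] using mul_le_of_le_one_right hr.le hu
  obtain ⟨p, hp, hmax⟩ := (isCompact_of_isClosed_isBounded
    (isClosed_inscribedEllipsoids hK.isClosed) (isBounded_inscribedEllipsoids hK.isBounded)
    ).exists_isMaxOn ⟨_, hball⟩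
    (continuous_abs.comp (ContinuousLinearMap.continuous_det.comp continuous_fst)).continuousOn
  refine ⟨p, hp, fun h => ?_, hmax⟩
  have := hmax hball
  simp [h, ContinuousLinearMap.det, hr.ne'] at this

theorem image_subset_closedBall_of_norm_apply_le {S : Set F} {c : F} {r : ℝ} {T : F →L[ℝ] F}
    (hS : S ⊆ closedBall c r) (hT : ∀ x, ‖T x‖ ≤ ‖x‖) : T '' S ⊆ closedBall (T c) r := by
  rintro _ ⟨x, hx, rfl⟩
  rw [mem_closedBall, dist_eq_norm, ← map_sub]
  exact (hT _).trans (mem_closedBall_iff_norm.1 (hS hx))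

theorem two_le_diam_image_of_closedBall_subset {S : Set F} {c f : F} {T : F →L[ℝ] F}
    (hS : closedBall c 1 ⊆ S) (hb : Bornology.IsBounded (T '' S)) (hf : ‖f‖ = 1)
    (hTf : T f = f) : 2 ≤ diam (T '' S) := by
  have hmem : ∀ σ : ℝ, |σ| ≤ 1 → T c + σ • f ∈ T '' S := fun σ hσ =>
    ⟨c + σ • f, hS (by simpa [norm_smul, hf] using hσ), by simp [hTf]⟩
  calc (2 : ℝ) = dist (T c + (1 : ℝ) • f) (T c + (-1 : ℝ) • f) := by
        rw [dist_add_left, dist_eq_norm, ← sub_smul, norm_smul, hf]; norm_num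
    _ ≤ diam (T '' S) := dist_le_diam_of_mem hb (hmem 1 (by simp)) (hmem (-1) (by simp))

end NormedSpace

variable {E : Type*} [NormedAddCommGroup E] [InnerProductSpace ℝ E]

namespace Submodule

variable (K : Submodule ℝ E) [K.HasOrthogonalProjection]

def stretch (a b : ℝ) : E →L[ℝ] E :=
  a • K.starProjection + b • Kᗮ.starProjection

variable {K} (a b : ℝ)

theorem stretch_apply (x : E) :
    K.stretch a b x = a • K.starProjection x + b • Kᗮ.starProjection x := rfl

theorem stretch_apply_of_mem {x : E} (hx : x ∈ K) : K.stretch a b x = a • x := by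
  simp [stretch_apply, starProjection_eq_self_iff.2 hx, starProjection_orthogonal_apply_eq_zero hx]

theorem stretch_apply_of_mem_orthogonal {x : E} (hx : x ∈ Kᗮ) : K.stretch a b x = b • x := by
  simp [stretch_apply, starProjection_eq_self_iff.2 hx, (starProjection_apply_eq_zero_iff K).2 hx]

theorem norm_stretch_apply_sq (x : E) :
    ‖K.stretch a b x‖ ^ 2 =
      a ^ 2 * ‖K.starProjection x‖ ^ 2 + b ^ 2 * ‖Kᗮ.starProjection x‖ ^ 2 := by
  have h : ⟪K.starProjection x, Kᗮ.starProjection x⟫ = 0 :=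
    inner_right_of_mem_orthogonal (K.starProjection_apply_mem x) (Kᗮ.starProjection_apply_mem x)
  rw [stretch_apply, norm_add_sq_real, real_inner_smul_left, real_inner_smul_right, h, norm_smul,
    norm_smul, mul_pow, mul_pow, Real.norm_eq_abs, Real.norm_eq_abs, sq_abs, sq_abs]
  ring

theorem norm_stretch_apply_le {t : ℝ} (ht : |t| ≤ 1) (x : E) : ‖K.stretch t 1 x‖ ≤ ‖x‖ := by
  refine (sq_le_sq₀ (norm_nonneg _) (norm_nonneg _)).1 ?_
  rw [norm_stretch_apply_sq, K.norm_sq_eq_add_norm_sq_starProjection x, one_pow, one_mul]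
  gcongr
  exact mul_le_of_le_one_left (sq_nonneg _) ((sq_le_one_iff_abs_le_one t).2 ht)

theorem det_stretch [FiniteDimensional ℝ E] :
    (K.stretch a b).det = a ^ finrank ℝ K * b ^ finrank ℝ Kᗮ := by
  let e := K.prodEquivOfIsCompl _ K.isCompl_orthogonal
  have : (e.symm : E →ₗ[ℝ] K × Kᗮ) ∘ₗ (K.stretch a b : E →ₗ[ℝ] E) ∘ₗ
      (e.symm.symm : K × Kᗮ →ₗ[ℝ] E) = LinearMap.prodMap (a • LinearMap.id) (b • LinearMap.id) := by
    ext x <;> simp [e, stretch_apply, (starProjection_apply_eq_zero_iff K).2 (SetLike.coe_mem _)]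
  rw [ContinuousLinearMap.det, ← LinearMap.det_conj _ e.symm, this, LinearMap.det_prodMap,
    LinearMap.det_smul, LinearMap.det_smul, LinearMap.det_id, LinearMap.det_id, mul_one, mul_one]

end Submodule

open Submodule in
theorem stretch_add_smul_mem_of_convex {C : Set E} (hC : Convex ℝ C)
    (hB : closedBall (0 : E) 1 ⊆ C) {e : E} (he : ‖e‖ = 1) {s : ℝ} (hy : s • e ∈ C)
    {ε : ℝ} (hε₀ : 0 ≤ ε) (hε : ε < 1 / 2) {u : E} (hu : ‖u‖ ≤ 1) :
    (ℝ ∙ e).stretch (1 + (s - 1) * ε) √(1 - 2 * ε) u + ((s - 1) * ε) • e ∈ C := by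
  set τ := ⟪e, u⟫
  set w := (ℝ ∙ e)ᗮ.starProjection u
  have hPu : (ℝ ∙ e).starProjection u = τ • e := starProjection_unit_singleton ℝ he u
  have hew : ⟪e, w⟫ = 0 :=
    inner_right_of_mem_orthogonal (mem_span_singleton_self e) (starProjection_apply_mem _ u)
  have hτw : τ ^ 2 + ‖w‖ ^ 2 ≤ 1 := by
    have h := (ℝ ∙ e).norm_sq_eq_add_norm_sq_starProjection u
    rw [hPu, norm_smul, he, mul_one, Real.norm_eq_abs, sq_abs] at h
    nlinarith [norm_nonneg u]
  have hτ : |τ| ≤ 1 := (abs_real_inner_le_norm e u).trans (by rw [he, one_mul]; exact hu)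
  obtain ⟨hτ₁, hτ₂⟩ := abs_le.1 hτ
  set b := √(1 - 2 * ε)
  have hb : b ^ 2 = 1 - 2 * ε := Real.sq_sqrt (by linarith)
  set t := ε * (1 + τ)
  have ht₀ : 0 ≤ t := mul_nonneg hε₀ (by linarith)
  have ht₁ : 0 < 1 - t := by nlinarith
  have hdecomp : (ℝ ∙ e).stretch (1 + (s - 1) * ε) b u + ((s - 1) * ε) • e - t • (s • e) =
      (τ - t) • e + b • w := by
    rw [stretch_apply, hPu]; module
  -- by `hτw` and the identity `(τ - t) ^ 2 + (1 - 2 * ε) * (1 - τ ^ 2) = (1 - t) ^ 2`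
  have hnorm : ‖(τ - t) • e + b • w‖ ^ 2 ≤ (1 - t) ^ 2 := by
    rw [norm_add_sq_real, real_inner_smul_left, real_inner_smul_right, hew, norm_smul,
      norm_smul, he, Real.norm_eq_abs, Real.norm_eq_abs, mul_pow, mul_pow, sq_abs, sq_abs, hb]
    nlinarith
  set p := (1 - t)⁻¹ • ((τ - t) • e + b • w)
  have hp : p ∈ closedBall (0 : E) 1 := by
    rw [mem_closedBall_zero_iff, norm_smul, norm_inv, Real.norm_eq_abs, abs_of_pos ht₁,
      inv_mul_le_iff₀ ht₁, mul_one]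
    exact abs_le_of_sq_le_sq' hnorm ht₁.le |>.2
  have hmem := hC (hB hp) hy ht₁.le ht₀ (by ring)
  rwa [smul_inv_smul₀ ht₁.ne', ← hdecomp, sub_add_cancel] at hmem

variable [FiniteDimensional ℝ E]

open Submodule in
theorem exists_one_lt_abs_det_of_finrank_lt_norm {C : Set E} (hC : Convex ℝ C)
    (hB : closedBall (0 : E) 1 ⊆ C) {y : E} (hy : y ∈ C) (hny : (finrank ℝ E : ℝ) < ‖y‖) :
    ∃ (A : E →L[ℝ] E) (c : E), MapsTo (fun u => A u + c) (closedBall 0 1) C ∧ 1 < |A.det| := by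
  set s := ‖y‖
  have hs : 0 < s := (Nat.cast_nonneg _).trans_lt hny
  set e := s⁻¹ • y
  have he : ‖e‖ = 1 := by rw [norm_smul, norm_inv, norm_norm, inv_mul_cancel₀ hs.ne']
  have he₁ : finrank ℝ (ℝ ∙ e) = 1 := finrank_span_singleton (norm_ne_zero_iff.1 (by simp [he]))
  have hdim := (ℝ ∙ e).finrank_add_finrank_orthogonal
  rw [he₁] at hdim
  obtain ⟨ε, hε₀, hε, hdet⟩ := exists_one_lt_mul_sqrt_pow (m := finrank ℝ (ℝ ∙ e)ᗮ) (s := s)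
    (by rw [← hdim] at hny; push_cast at hny; linarith)
  refine ⟨(ℝ ∙ e).stretch (1 + (s - 1) * ε) √(1 - 2 * ε), ((s - 1) * ε) • e,
    fun u hu => stretch_add_smul_mem_of_convex hC hB he (by rwa [smul_inv_smul₀ hs.ne'])
      hε₀.le hε (mem_closedBall_zero_iff.1 hu), ?_⟩
  rw [det_stretch, he₁, pow_one]
  exact hdet.trans_le (le_abs_self _)

variable {K : Set E}

theorem norm_le_finrank_of_isMaxOn_abs_det (hK : Convex ℝ K) {p : (E →L[ℝ] E) × E}
    (hp : p ∈ inscribedEllipsoids K) (hdet : p.1.det ≠ 0)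
    (hmax : IsMaxOn (fun q => |q.1.det|) (inscribedEllipsoids K) p)
    {w : E} (hw : p.1 w + p.2 ∈ K) : ‖w‖ ≤ finrank ℝ E := by
  by_contra! h
  obtain ⟨A, c, hAc, hA⟩ := exists_one_lt_abs_det_of_finrank_lt_norm
    ((hK.translate_preimage_left p.2).linear_preimage (p.1 : E →ₗ[ℝ] E)) (fun u hu => hp hu) hw h
  have hq : (p.1 ∘L A, p.1 c + p.2) ∈ inscribedEllipsoids K := fun u hu => by
    simpa [add_assoc] using hAc hu
  have : |(p.1 ∘L A).det| ≤ |p.1.det| := hmax hq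
  rw [ContinuousLinearMap.det, ContinuousLinearMap.toLinearMap_comp, LinearMap.det_comp,
    abs_mul] at this
  nlinarith [abs_pos.2 hdet]

theorem exists_john_position (hKc : IsCompact K) (hK : Convex ℝ K)
    (hK' : (interior K).Nonempty) :
    ∃ (G : E ≃L[ℝ] E) (c : E),
      closedBall c 1 ⊆ G '' K ∧ G '' K ⊆ closedBall c (finrank ℝ E) := by
  obtain ⟨p, hp, hdet, hmax⟩ := exists_isMaxOn_abs_det hKc hK'
  set F := p.1.toContinuousLinearEquivOfDetNeZero hdet
  have hF : ∀ x, F x = p.1 x := fun _ => rfl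
  refine ⟨F.symm, F.symm p.2, fun z hz => ⟨p.1 (z - F.symm p.2) + p.2, hp ?_, ?_⟩, ?_⟩
  · simpa [dist_eq_norm] using hz
  · rw [F.symm.map_add, ← hF, F.symm_apply_apply, sub_add_cancel]
  · rintro _ ⟨x, hx, rfl⟩
    rw [mem_closedBall, dist_eq_norm, ← F.symm.map_sub]
    refine norm_le_finrank_of_isMaxOn_abs_det hK hp hdet hmax ?_
    rwa [← hF, F.apply_symm_apply, sub_add_cancel]

open Submodule in
theorem exists_norm_eq_one_stretch_apply_eq {e : E} (he : ‖e‖ = 1) {t : ℝ}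
    (ht : finrank ℝ E = 1 → t = 1) : ∃ f : E, ‖f‖ = 1 ∧ (ℝ ∙ e).stretch t 1 f = f := by
  have hdim := (ℝ ∙ e).finrank_add_finrank_orthogonal
  rw [finrank_span_singleton (norm_ne_zero_iff.1 (by simp [he]))] at hdim
  rcases Nat.eq_zero_or_pos (finrank ℝ (ℝ ∙ e)ᗮ) with h | h
  · refine ⟨e, he, ?_⟩
    rw [stretch_apply_of_mem _ _ (mem_span_singleton_self e), ht (by omega), one_smul]
  · have : Nontrivial (ℝ ∙ e)ᗮ := Module.nontrivial_of_finrank_pos h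
    obtain ⟨f, hf⟩ := exists_norm_eq (ℝ ∙ e)ᗮ zero_le_one
    exact ⟨f, hf, by rw [stretch_apply_of_mem_orthogonal _ _ f.2, one_smul]⟩

variable [MeasurableSpace E] [BorelSpace E] (μ : Measure E) [μ.IsAddHaarMeasure]

theorem exists_squash_of_closedBall_subset [Nontrivial E] {S : Set E} {c : E}
    (hin : closedBall c 1 ⊆ S) (hout : S ⊆ closedBall c (finrank ℝ E)) :
    ∃ T : E ≃L[ℝ] E, μ (T '' S) = μ (ball 0 1) ∧
      2 ≤ diam (T '' S) ∧ diam (T '' S) ≤ 2 * finrank ℝ E := by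
  have hball : μ (closedBall c 1) = μ (ball 0 1) := by
    simp [Measure.addHaar_closedBall μ c zero_le_one]
  have hfin : μ S ≠ ⊤ := ((measure_mono hout).trans_lt measure_closedBall_lt_top).ne
  have hτ : 0 < μ.real (ball 0 1) :=
    ENNReal.toReal_pos (measure_ball_pos μ 0 one_pos).ne' measure_ball_lt_top.ne
  have hτS : μ.real (ball 0 1) ≤ μ.real S := ENNReal.toReal_mono hfin (hball ▸ measure_mono hin)
  set t := μ.real (ball 0 1) / μ.real S
  have ht₀ : 0 < t := div_pos hτ (hτ.trans_le hτS)
  have ht₁ : t ≤ 1 := div_le_one_of_le₀ hτS (hτ.trans_le hτS).le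
  obtain ⟨e, he⟩ := exists_norm_eq E zero_le_one
  set T := (ℝ ∙ e).stretch t 1
  have hdet : T.det = t := by
    rw [Submodule.det_stretch, finrank_span_singleton (norm_ne_zero_iff.1 (by simp [he])),
      pow_one, one_pow, mul_one]
  obtain ⟨f, hf, hTf⟩ := exists_norm_eq_one_stretch_apply_eq he (t := t) fun h => by
    have : μ.real S ≤ μ.real (ball 0 1) := ENNReal.toReal_mono measure_ball_lt_top.ne
      (hball ▸ measure_mono (by simpa [h] using hout))
    exact le_antisymm ht₁ ((one_le_div (hτ.trans_le hτS)).2 this)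
  have hTS := image_subset_closedBall_of_norm_apply_le hout
    (Submodule.norm_stretch_apply_le (K := ℝ ∙ e) (abs_le.2 ⟨by linarith, ht₁⟩))
  refine ⟨T.toContinuousLinearEquivOfDetNeZero (hdet ▸ ht₀.ne'), ?_, ?_, ?_⟩
  · rw [Measure.addHaar_image_continuousLinearEquiv]
    change ENNReal.ofReal |T.det| * μ S = _
    rw [hdet, abs_of_pos ht₀, ← ofReal_measureReal hfin, ← ENNReal.ofReal_mul ht₀.le,
      div_mul_cancel₀ _ (hτ.trans_le hτS).ne', ofReal_measureReal]
  · exact two_le_diam_image_of_closedBall_subset hin (isBounded_closedBall.subset hTS) hf hTf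
  · exact (diam_mono hTS isBounded_closedBall).trans (diam_closedBall (by positivity))

theorem exists_linearEquiv_addHaar_image_eq_ball [Nontrivial E] {Q : Set E} (hQ : Convex ℝ Q)
    (hQb : Bornology.IsBounded Q) (hQi : (interior Q).Nonempty) :
    ∃ Ψ : E ≃ₗ[ℝ] E, μ (Ψ '' Q) = μ (ball 0 1) ∧
      2 ≤ diam (Ψ '' Q) ∧ diam (Ψ '' Q) ≤ 2 * finrank ℝ E := by
  obtain ⟨G, c, hin, hout⟩ := exists_john_position hQb.isCompact_closure hQ.closure
    (hQi.mono (interior_mono subset_closure))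
  obtain ⟨T, hvol, hdiam⟩ := exists_squash_of_closedBall_subset μ hin hout
  set Ψ := G.trans T
  have hcl : closure (Ψ '' Q) = T '' (G '' closure Q) := by
    rw [← Ψ.image_closure, image_image]; rfl
  have hμ : μ (closure (Ψ '' Q)) = μ (Ψ '' Q) :=
    measure_closure_of_null_frontier ((hQ.linear_image (Ψ : E →ₗ[ℝ] E)).addHaar_frontier μ)
  refine ⟨Ψ.toLinearEquiv, ?_, ?_⟩
  · rw [ContinuousLinearEquiv.coe_toLinearEquiv, ← hμ, hcl, hvol]
  · rw [ContinuousLinearEquiv.coe_toLinearEquiv, ← diam_closure, hcl]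
    exact hdiam

/-- **Corollary of John's ellipsoid theorem** (Proposition 4.4 / `prop:John`).
For every non-empty convex open bounded `Q ⊆ ℝ^d` there is a linear bijection
`Ψ : ℝ^d → ℝ^d` with `τ_d/(2^d d^d) ≤ |Ψ(Q)|/(diam Ψ(Q))^d ≤ τ_d/2^{d/2}`,
where `τ_d` is the volume of the Euclidean unit ball. -/
theorem john_quotient_bound
    (d : ℕ) (hd : 1 ≤ d) (Q : Set (EuclideanSpace ℝ (Fin d)))
    (hQne : Q.Nonempty) (hQconv : Convex ℝ Q) (hQopen : IsOpen Q)
    (hQbdd : Bornology.IsBounded Q) :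
    ∃ Ψ : EuclideanSpace ℝ (Fin d) ≃ₗ[ℝ] EuclideanSpace ℝ (Fin d),
      (volume (Metric.ball (0 : EuclideanSpace ℝ (Fin d)) 1)).toReal / (2 ^ d * (d : ℝ) ^ d)
          ≤ (volume (Ψ '' Q)).toReal / Metric.diam (Ψ '' Q) ^ d ∧
        (volume (Ψ '' Q)).toReal / Metric.diam (Ψ '' Q) ^ d ≤
          (volume (Metric.ball (0 : EuclideanSpace ℝ (Fin d)) 1)).toReal /
            (2 : ℝ) ^ ((d : ℝ) / 2) := by
  have : Nontrivial (EuclideanSpace ℝ (Fin d)) :=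
    Module.nontrivial_of_finrank_pos (R := ℝ) (by rw [finrank_euclideanSpace_fin]; exact hd)
  obtain ⟨Ψ, hvol, hdiam₁, hdiam₂⟩ := exists_linearEquiv_addHaar_image_eq_ball volume hQconv
    hQbdd (by rwa [hQopen.interior_eq])
  rw [finrank_euclideanSpace_fin] at hdiam₂
  have hτ : 0 ≤ (volume (ball (0 : EuclideanSpace ℝ (Fin d)) 1)).toReal := ENNReal.toReal_nonneg
  refine ⟨Ψ, ?_, ?_⟩ <;> rw [hvol] <;> apply div_le_div_of_nonneg_left hτ (by positivity)
  · calc diam (Ψ '' Q) ^ d ≤ (2 * d) ^ d := pow_le_pow_left₀ (by linarith) hdiam₂ d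
      _ = 2 ^ d * d ^ d := mul_pow _ _ _
  · calc (2 : ℝ) ^ ((d : ℝ) / 2) ≤ 2 ^ (d : ℝ) :=
          Real.rpow_le_rpow_of_exponent_le one_le_two (half_le_self d.cast_nonneg)
      _ = 2 ^ d := Real.rpow_natCast 2 d
      _ ≤ diam (Ψ '' Q) ^ d := pow_le_pow_left₀ zero_le_two hdiam₁ d
end
end

section
/- Let d ≥ 1 and let Q ⊆ ℝ^d be a non-empty, convex, open, bounded set which is centrally symmetric, i.e., there exists x₀ ∈ Q such that x₀ + x ∈ Q implies x₀ − x ∈ Q. Then there exists a linear bijection Ψ : ℝ^d → ℝ^d such that τ_d / (4d)^{d/2} ≤ |Ψ(Q)| / (diam Ψ(Q))^d ≤ τ_d / 2^{d/2}. -/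
open MeasureTheory Real Set
open scoped BigOperators ENNReal RealInnerProductSpace

noncomputable section

/-!
Translate the centre of `Q` to the origin. John's theorem for symmetric bodies then gives a
linear image `L` of `Q` with `B(0,1) ⊆ closure L ⊆ B(0,√d)`: take a linear map `T` of maximal
`|det T|` among those mapping `B(0,1)` into `closure Q`. If `T⁻¹(closure Q)` contained a point
`q` with `‖q‖ > √d`, the map stretching by `a` along `q` and by `b` on `q^⊥`, with `a b^(d-1) > 1`,
would still send `B(0,1)` into the convex hull of `B(0,1)` and `±q` (compare support functions),
contradicting maximality. Finally `2 ≤ diam L ≤ 2√d`, `|B(0,1)| ≤ |L|`, and by symmetry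
`L ⊆ B(0, diam L / 2)`, so `|L| ≤ (diam L / 2)^d |B(0,1)|`; these give both bounds.
-/

open scoped Pointwise

theorem LinearMap.det_eq_prod_of_apply_basis {R M ι : Type*} [CommRing R] [AddCommGroup M]
    [Module R M] [Fintype ι] [DecidableEq ι] (B : Module.Basis ι R M) (f : M →ₗ[R] M)
    (c : ι → R) (hf : ∀ i, f (B i) = c i • B i) : LinearMap.det f = ∏ i, c i := by
  have : f = Matrix.toLin B B (Matrix.diagonal c) :=
    B.ext fun i => by rw [hf, Matrix.toLin_self]; simp [Matrix.diagonal_apply, ite_smul]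
  rw [this, LinearMap.det_toLin, Matrix.det_diagonal]

theorem exists_one_lt_mul_one_sub_pow {n : ℕ} {s : ℝ} (hs : n + 1 < s) :
    ∃ δ : ℝ, 0 < δ ∧ δ < 1 ∧ 1 < (1 - δ + δ * s) * (1 - δ) ^ n := by
  have hn : (0 : ℝ) ≤ n := n.cast_nonneg
  have hs0 : 0 < s := by linarith
  set δ := (s - (n + 1)) / (s * (n + 1))
  have hδs : δ * (s * (n + 1)) = s - (n + 1) := div_mul_cancel₀ _ (by positivity)
  have hδ0 : 0 < δ := div_pos (by linarith) (by positivity)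
  have hδ1 : δ < 1 := (div_lt_one (by positivity)).2 (by nlinarith)
  have hbern : 1 - n * δ ≤ (1 - δ) ^ n := by
    simpa [sub_eq_add_neg] using one_add_mul_le_pow (by linarith : (-2 : ℝ) ≤ -δ) n
  refine ⟨δ, hδ0, hδ1, ?_⟩
  calc 1 < 1 + δ ^ 2 * (s + n) := lt_add_of_pos_right _ (by positivity)
    _ = (1 - δ + δ * s) * (1 - n * δ) := by linear_combination δ * hδs
    _ ≤ (1 - δ + δ * s) * (1 - δ) ^ n := by gcongr

theorem isCompact_setOf_mapsTo_closedBall {E F : Type*} [NormedAddCommGroup E] [NormedSpace ℝ E]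
    [FiniteDimensional ℝ E] [NormedAddCommGroup F] [NormedSpace ℝ F] [FiniteDimensional ℝ F]
    {C : Set F} (hCc : IsClosed C) (hCb : Bornology.IsBounded C) :
    IsCompact {T : E →L[ℝ] F | MapsTo T (Metric.closedBall 0 1) C} := by
  obtain ⟨M, hM0, hCM⟩ := hCb.subset_closedBall_lt 0 0
  refine Metric.isCompact_of_isClosed_isBounded
    (hCc.setOfPred_mapsTo fun y _ => (ContinuousLinearMap.apply ℝ F y).continuous)
    ((Metric.isBounded_closedBall (x := 0) (r := M)).subset fun T hT => ?_)
  refine mem_closedBall_zero_iff.2 (T.opNorm_le_of_unit_norm hM0.le fun x hx => ?_)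
  exact mem_closedBall_zero_iff.1 (hCM (hT (mem_closedBall_zero_iff.2 hx.le)))

section InnerProductSpace

open Metric Module Topology

variable {E : Type*} [NormedAddCommGroup E] [InnerProductSpace ℝ E]

def axialStretch (a b : ℝ) (v : E) : E →L[ℝ] E :=
  b • ContinuousLinearMap.id ℝ E + (a - b) • (innerSL ℝ v).smulRight v

theorem axialStretch_apply (a b : ℝ) (v x : E) :
    axialStretch a b v x = b • x + ((a - b) * ⟪v, x⟫) • v := by
  simp [axialStretch, smul_smul]

theorem inner_axialStretch_left (a b : ℝ) (v x y : E) :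
    ⟪axialStretch a b v x, y⟫ = ⟪x, axialStretch a b v y⟫ := by
  simp only [axialStretch_apply, inner_add_left, inner_add_right, real_inner_smul_left,
    real_inner_smul_right, real_inner_comm v]
  ring

theorem norm_axialStretch_sq (a b : ℝ) {v : E} (hv : ‖v‖ = 1) (x : E) :
    ‖axialStretch a b v x‖ ^ 2 = b ^ 2 * ‖x‖ ^ 2 + (a ^ 2 - b ^ 2) * ⟪v, x⟫ ^ 2 := by
  have hvv : ⟪v, v⟫ = 1 := by simp [hv]
  rw [← real_inner_self_eq_norm_sq, ← real_inner_self_eq_norm_sq]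
  simp only [axialStretch_apply, inner_add_left, inner_add_right, real_inner_smul_left,
    real_inner_smul_right, hvv, real_inner_comm x v]
  ring

theorem det_axialStretch [FiniteDimensional ℝ E] (a b : ℝ) {v : E} (hv : ‖v‖ = 1) :
    (axialStretch a b v).det = a * b ^ (finrank ℝ E - 1) := by
  classical
  have hv' : Orthonormal ℝ ((↑) : ({v} : Set E) → E) := by
    rw [orthonormal_subtype_iff_ite]
    simp [hv]
  obtain ⟨u, B, hvu, hB⟩ := hv'.exists_orthonormalBasis_extension
  set i₀ : u := ⟨v, hvu rfl⟩
  have hinner : ∀ i : u, ⟪v, i⟫ = if i = i₀ then 1 else 0 := fun i => by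
    have h := orthonormal_iff_ite.mp B.orthonormal i₀ i
    rw [hB] at h
    exact h.trans (if_congr eq_comm rfl rfl)
  have hdet := LinearMap.det_eq_prod_of_apply_basis B.toBasis (axialStretch a b v)
    (fun i => if i = i₀ then a else b) fun i => by
      simp only [OrthonormalBasis.coe_toBasis, ContinuousLinearMap.coe_coe, axialStretch_apply,
        hB, hinner]
      split_ifs with h
      · subst h; module
      · simp
  rw [ContinuousLinearMap.det, hdet, ← Finset.mul_prod_erase _ _ (Finset.mem_univ i₀),
    if_pos rfl, Finset.prod_congr rfl fun i hi => if_neg (Finset.ne_of_mem_erase hi),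
    Finset.prod_const, Finset.card_erase_of_mem (Finset.mem_univ i₀), Finset.card_univ,
    finrank_eq_card_basis B.toBasis]

theorem IsClosed.exists_inner_lt_of_notMem [CompleteSpace E] {C : Set E} (hCc : IsClosed C)
    (hC : Convex ℝ C) {x : E} (hx : x ∉ C) :
    ∃ (w : E) (u : ℝ), (∀ c ∈ C, ⟪w, c⟫ < u) ∧ u < ⟪w, x⟫ := by
  obtain ⟨f, u, hfC, hfx⟩ := geometric_hahn_banach_closed_point hC hCc hx
  refine ⟨(InnerProductSpace.toDual ℝ E).symm f, u, fun c hc => ?_, ?_⟩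
  · simpa [InnerProductSpace.toDual_symm_apply] using hfC c hc
  · simpa [InnerProductSpace.toDual_symm_apply] using hfx

theorem norm_lt_of_forall_inner_lt {w : E} {u : ℝ}
    (h : ∀ c ∈ closedBall (0 : E) 1, ⟪w, c⟫ < u) : ‖w‖ < u := by
  rcases eq_or_ne w 0 with rfl | hw
  · simpa using h 0 (by simp)
  · have hw' : ‖w‖ ≠ 0 := norm_ne_zero_iff.2 hw
    have := h (‖w‖⁻¹ • w) (by simp [norm_smul, hw'])
    rwa [real_inner_smul_right, real_inner_self_eq_norm_sq, sq, inv_mul_cancel_left₀ hw'] at this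

theorem mapsTo_axialStretch [CompleteSpace E] {C : Set E} (hCc : IsClosed C) (hC : Convex ℝ C)
    (hBC : closedBall 0 1 ⊆ C) {v : E} (hv : ‖v‖ = 1) {R : ℝ} (hRv : R • v ∈ C)
    (hRv' : -(R • v) ∈ C) {a b δ : ℝ} (hδ0 : 0 < δ) (hδ1 : δ ≤ 1)
    (ha : a ^ 2 = 1 - δ + δ * R ^ 2) (hb : b ^ 2 = 1 - δ) :
    MapsTo (axialStretch a b v) (closedBall 0 1) C := by
  intro y hy
  by_contra hSy
  obtain ⟨w, u, hwC, hwu⟩ := hCc.exists_inner_lt_of_notMem hC hSy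
  have hw : ‖w‖ < u := norm_lt_of_forall_inner_lt fun c hc => hwC c (hBC hc)
  have hRw : |R * ⟪v, w⟫| < u := by
    have h₁ := hwC _ hRv
    have h₂ := hwC _ hRv'
    rw [real_inner_smul_right, real_inner_comm] at h₁
    rw [inner_neg_right, real_inner_smul_right, real_inner_comm] at h₂
    exact abs_lt.2 ⟨by linarith, h₁⟩
  -- `‖S w‖²` is a convex combination of `‖w‖²` and `(R ⟪v, w⟫)²`, both below `u²`.
  have hSw : ‖axialStretch a b v w‖ < u := by
    have hu : 0 < u := (norm_nonneg w).trans_lt hw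
    have h₁ : ‖w‖ ^ 2 < u ^ 2 := pow_lt_pow_left₀ hw (norm_nonneg w) two_ne_zero
    have h₂ : (R * ⟪v, w⟫) ^ 2 < u ^ 2 := sq_lt_sq' (abs_lt.1 hRw).1 (abs_lt.1 hRw).2
    refine lt_of_pow_lt_pow_left₀ 2 hu.le ?_
    rw [norm_axialStretch_sq a b hv, ha, hb]
    nlinarith [mul_le_mul_of_nonneg_left h₁.le (sub_nonneg.2 hδ1), mul_lt_mul_of_pos_left h₂ hδ0]
  have := calc ⟪w, axialStretch a b v y⟫ = ⟪axialStretch a b v w, y⟫ :=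
        (inner_axialStretch_left a b v w y).symm
    _ ≤ ‖axialStretch a b v w‖ * ‖y‖ := real_inner_le_norm _ _
    _ ≤ ‖axialStretch a b v w‖ :=
        mul_le_of_le_one_right (norm_nonneg _) (mem_closedBall_zero_iff.1 hy)
  linarith

variable [FiniteDimensional ℝ E]

theorem exists_mapsTo_closedBall_one_lt_abs_det {C : Set E} (hCc : IsClosed C)
    (hC : Convex ℝ C) (hCs : ∀ x ∈ C, -x ∈ C) (hBC : closedBall 0 1 ⊆ C) {q : E} (hq : q ∈ C)
    (hq' : √(finrank ℝ E) < ‖q‖) :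
    ∃ S : E →L[ℝ] E, MapsTo S (closedBall 0 1) C ∧ 1 < |S.det| := by
  set R := ‖q‖
  have hR : 0 < R := (Real.sqrt_nonneg _).trans_lt hq'
  set v := R⁻¹ • q
  have hv : ‖v‖ = 1 := norm_smul_inv_norm (norm_pos_iff.1 hR)
  have hRv : R • v = q := by simp [v, smul_smul, hR.ne']
  obtain ⟨n, hn⟩ : ∃ n, finrank ℝ E = n + 1 :=
    Nat.exists_eq_add_one.2 (finrank_pos_iff_exists_ne_zero.2 ⟨q, norm_pos_iff.1 hR⟩)
  have hs : (n : ℝ) + 1 < R ^ 2 := by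
    have := Real.lt_sq_of_sqrt_lt hq'
    rwa [hn, Nat.cast_succ] at this
  obtain ⟨δ, hδ0, hδ1, hδ⟩ := exists_one_lt_mul_one_sub_pow hs
  set a := √(1 - δ + δ * R ^ 2)
  set b := √(1 - δ)
  have ha : a ^ 2 = 1 - δ + δ * R ^ 2 := Real.sq_sqrt (by nlinarith)
  have hb : b ^ 2 = 1 - δ := Real.sq_sqrt (by linarith)
  refine ⟨axialStretch a b v,
    mapsTo_axialStretch hCc hC hBC hv (hRv ▸ hq) (hRv ▸ hCs q hq) hδ0 hδ1.le ha hb, ?_⟩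
  rw [det_axialStretch a b hv, hn, Nat.add_sub_cancel, abs_of_nonneg (by positivity)]
  refine (one_lt_sq_iff₀ (by positivity)).1 ?_
  rwa [mul_pow, ← pow_mul, mul_comm n, pow_mul, ha, hb]

theorem exists_continuousLinearEquiv_john_position {C : Set E} (hCc : IsClosed C)
    (hC : Convex ℝ C) (hCb : Bornology.IsBounded C) (hCs : ∀ x ∈ C, -x ∈ C) (hC0 : C ∈ 𝓝 0) :
    ∃ T : E ≃L[ℝ] E, MapsTo T (closedBall 0 1) C ∧ T ⁻¹' C ⊆ closedBall 0 √(finrank ℝ E) := by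
  set 𝒯 := {T : E →L[ℝ] E | MapsTo T (closedBall 0 1) C}
  obtain ⟨ε, hε, hεC⟩ := Metric.mem_nhds_iff.1 hC0
  have hε𝒯 : (ε / 2) • ContinuousLinearMap.id ℝ E ∈ 𝒯 := fun y hy => hεC <| by
    simpa [norm_smul, abs_of_pos hε] using
      (mul_le_of_le_one_right (by positivity) (mem_closedBall_zero_iff.1 hy)).trans_lt
        (half_lt_self hε)
  obtain ⟨T₀, hT₀, hmax⟩ := (isCompact_setOf_mapsTo_closedBall hCc hCb).exists_isMaxOn
    ⟨_, hε𝒯⟩ (continuous_abs.comp ContinuousLinearMap.continuous_det).continuousOn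
  replace hmax : ∀ T ∈ 𝒯, |T.det| ≤ |T₀.det| := fun T hT => hmax hT
  have hdet : T₀.det ≠ 0 := by
    have h := hmax _ hε𝒯
    have : ((ε / 2) • ContinuousLinearMap.id ℝ E).det = (ε / 2) ^ finrank ℝ E := by
      simp [ContinuousLinearMap.det]
    rw [this] at h
    exact abs_pos.1 ((by positivity : (0 : ℝ) < |(ε / 2) ^ finrank ℝ E|).trans_le h)
  set T := T₀.toContinuousLinearEquivOfDetNeZero hdet
  refine ⟨T, hT₀, fun q hq => ?_⟩
  by_contra hq'
  obtain ⟨S, hS, hSdet⟩ := exists_mapsTo_closedBall_one_lt_abs_det (C := T ⁻¹' C)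
    (hCc.preimage T.continuous) (hC.linear_preimage T.toLinearMap)
    (fun x hx => by simpa using hCs _ hx) (fun y hy => hT₀ hy) hq (by simpa using hq')
  have h := hmax (T₀.comp S) fun y hy => hS hy
  rw [show (T₀.comp S).det = T₀.det * S.det from LinearMap.det_comp _ _, abs_mul] at h
  nlinarith [abs_pos.2 hdet]

end InnerProductSpace

section Volume

open Metric Module

theorem subset_closedBall_diam_div_two {E : Type*} [SeminormedAddCommGroup E]
    [NormedSpace ℝ E] {s : Set E} (hs : Bornology.IsBounded s) (hsymm : ∀ x ∈ s, -x ∈ s) :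
    s ⊆ closedBall 0 (diam s / 2) := fun x hx => by
  have := dist_le_diam_of_mem hs hx (hsymm x hx)
  rw [dist_eq_norm, sub_neg_eq_add, ← two_smul ℝ x, norm_smul, Real.norm_two] at this
  rw [mem_closedBall_zero_iff]
  linarith

variable {E : Type*} [NormedAddCommGroup E] [NormedSpace ℝ E] [FiniteDimensional ℝ E]
  [MeasurableSpace E] [BorelSpace E] (μ : Measure E) [μ.IsAddHaarMeasure]

theorem Convex.addHaar_closure {s : Set E} (hs : Convex ℝ s) : μ (closure s) = μ s := by
  refine le_antisymm ?_ (measure_mono subset_closure)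
  calc μ (closure s) ≤ μ s + μ (frontier s) := by
        rw [closure_eq_self_union_frontier]; exact measure_union_le _ _
    _ = μ s := by rw [hs.addHaar_frontier μ, add_zero]

theorem measure_div_diam_pow_mem_Icc [Nontrivial E] {s : Set E} (hs : Convex ℝ s)
    (hsymm : ∀ x ∈ s, -x ∈ s) (hball : closedBall 0 1 ⊆ closure s) {ρ : ℝ}
    (hρ : s ⊆ closedBall 0 ρ) :
    (μ (ball 0 1)).toReal / (2 * ρ) ^ finrank ℝ E ≤ (μ s).toReal / diam s ^ finrank ℝ E ∧
      (μ s).toReal / diam s ^ finrank ℝ E ≤ (μ (ball 0 1)).toReal / 2 ^ finrank ℝ E := by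
  set n := finrank ℝ E
  set τ := (μ (ball 0 1)).toReal
  have hsb : Bornology.IsBounded s := isBounded_closedBall.subset hρ
  have hρ0 : 0 ≤ ρ := by
    simpa using closure_minimal hρ isClosed_closedBall (hball (mem_closedBall_self zero_le_one))
  have hτ : 0 < τ := ENNReal.toReal_pos (measure_ball_pos μ _ one_pos).ne' measure_ball_lt_top.ne
  have hD2 : 2 ≤ diam s := by
    simpa [diam_closedBall_eq, diam_closure] using diam_mono hball hsb.closure
  have hDρ : diam s ≤ 2 * ρ := (diam_mono hρ isBounded_closedBall).trans (diam_closedBall hρ0)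
  have hτV : τ ≤ (μ s).toReal := by
    refine ENNReal.toReal_mono hsb.measure_lt_top.ne ?_
    calc μ (ball 0 1) ≤ μ (closure s) := measure_mono (ball_subset_closedBall.trans hball)
      _ = μ s := hs.addHaar_closure μ
  have hVD : (μ s).toReal ≤ (diam s / 2) ^ n * τ := by
    have := measure_mono (μ := μ) (subset_closedBall_diam_div_two hsb hsymm)
    rw [μ.addHaar_closedBall _ (by linarith)] at this
    have :=
      ENNReal.toReal_mono (ENNReal.mul_ne_top ENNReal.ofReal_ne_top measure_ball_lt_top.ne) this
    rwa [ENNReal.toReal_mul, ENNReal.toReal_ofReal (by positivity)] at this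
  constructor
  · rw [div_le_div_iff₀ (pow_pos (by linarith) _) (by positivity)]
    exact mul_le_mul hτV (pow_le_pow_left₀ (by positivity) hDρ n) (by positivity) (by positivity)
  · rw [div_le_div_iff₀ (by positivity) (by positivity)]
    calc (μ s).toReal * 2 ^ n ≤ (diam s / 2) ^ n * τ * 2 ^ n := by gcongr
      _ = τ * diam s ^ n := by rw [div_pow]; field_simp

end Volume

theorem john_quotient_bound_centrally_symmetric_general
    (d : ℕ) (hd : 1 ≤ d) (Q : Set (EuclideanSpace ℝ (Fin d)))
    (hQconv : Convex ℝ Q) (hQopen : IsOpen Q)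
    (hQbdd : Bornology.IsBounded Q)
    (hQsymm : ∃ x₀ ∈ Q, ∀ x, x₀ + x ∈ Q → x₀ - x ∈ Q) :
    ∃ Ψ : EuclideanSpace ℝ (Fin d) ≃ₗ[ℝ] EuclideanSpace ℝ (Fin d),
      (volume (Metric.ball (0 : EuclideanSpace ℝ (Fin d)) 1)).toReal /
            (4 * (d : ℝ)) ^ ((d : ℝ) / 2)
          ≤ (volume (Ψ '' Q)).toReal / Metric.diam (Ψ '' Q) ^ d ∧
        (volume (Ψ '' Q)).toReal / Metric.diam (Ψ '' Q) ^ d ≤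
          (volume (Metric.ball (0 : EuclideanSpace ℝ (Fin d)) 1)).toReal /
            (2 : ℝ) ^ ((d : ℝ) / 2) := by
  obtain ⟨x₀, hx₀, hsymm⟩ := hQsymm
  set K := -x₀ +ᵥ Q
  have hK : ∀ x, x ∈ K ↔ x₀ + x ∈ Q := by simp [K, Set.mem_vadd_set_iff_neg_vadd_mem]
  have hKs : ∀ x ∈ K, -x ∈ K := fun x hx => by
    simpa [hK, ← sub_eq_add_neg] using hsymm x ((hK x).1 hx)
  obtain ⟨T, hTB, hTK⟩ := exists_continuousLinearEquiv_john_position isClosed_closure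
    (hQconv.vadd _).closure (hQbdd.vadd _).closure
    (fun x hx => map_mem_closure continuous_neg hx hKs)
    (Filter.mem_of_superset ((hQopen.vadd _).mem_nhds ((hK 0).2 (by simpa using hx₀)))
      subset_closure)
  set Ψ := T.symm.toLinearEquiv
  have hΨ : closure (Ψ '' K) = T ⁻¹' closure K := by
    rw [ContinuousLinearEquiv.coe_toLinearEquiv, ← T.symm.image_closure, T.image_symm_eq_preimage]
  have : NeZero d := ⟨by omega⟩
  obtain ⟨hlower, hupper⟩ := measure_div_diam_pow_mem_Icc volume
    ((hQconv.vadd _).linear_image Ψ.toLinearMap)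
    (fun _ ⟨k, hk, hx⟩ => ⟨-k, hKs k hk, by simp [← hx]⟩) (hΨ ▸ hTB.subset_preimage)
    (subset_closure.trans (hΨ ▸ hTK))
  rw [finrank_euclideanSpace_fin] at hlower hupper
  refine ⟨Ψ, ?_⟩
  rw [show Q = x₀ +ᵥ K from (vadd_neg_vadd x₀ Q).symm, image_vadd_distrib, measure_vadd,
    diam_vadd, Real.rpow_div_two_eq_sqrt _ (by positivity), Real.rpow_div_two_eq_sqrt _ zero_le_two,
    Real.rpow_natCast, Real.rpow_natCast, Real.sqrt_mul zero_le_four,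
    show (4 : ℝ) = 2 ^ 2 by norm_num, Real.sqrt_sq zero_le_two]
  have hsqrt2 : √2 ^ d ≤ (2 : ℝ) ^ d :=
    pow_le_pow_left₀ (Real.sqrt_nonneg 2) (Real.sqrt_le_iff.2 ⟨by norm_num, by norm_num⟩) d
  exact ⟨hlower,
    hupper.trans (div_le_div_of_nonneg_left ENNReal.toReal_nonneg (by positivity) hsqrt2)⟩

/-- **Corollary of John's ellipsoid theorem, centrally symmetric case**
(Proposition 4.4 / `prop:John`). For every non-empty convex open bounded centrally
symmetric `Q ⊆ ℝ^d` there is a linear bijection `Ψ : ℝ^d → ℝ^d` with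
`τ_d/(4d)^{d/2} ≤ |Ψ(Q)|/(diam Ψ(Q))^d ≤ τ_d/2^{d/2}`. -/
theorem john_quotient_bound_centrally_symmetric
    (d : ℕ) (hd : 1 ≤ d) (Q : Set (EuclideanSpace ℝ (Fin d)))
    (hQne : Q.Nonempty) (hQconv : Convex ℝ Q) (hQopen : IsOpen Q)
    (hQbdd : Bornology.IsBounded Q)
    (hQsymm : ∃ x₀ ∈ Q, ∀ x, x₀ + x ∈ Q → x₀ - x ∈ Q) :
    ∃ Ψ : EuclideanSpace ℝ (Fin d) ≃ₗ[ℝ] EuclideanSpace ℝ (Fin d),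
      (volume (Metric.ball (0 : EuclideanSpace ℝ (Fin d)) 1)).toReal /
            (4 * (d : ℝ)) ^ ((d : ℝ) / 2)
          ≤ (volume (Ψ '' Q)).toReal / Metric.diam (Ψ '' Q) ^ d ∧
        (volume (Ψ '' Q)).toReal / Metric.diam (Ψ '' Q) ^ d ≤
          (volume (Metric.ball (0 : EuclideanSpace ℝ (Fin d)) 1)).toReal /
            (2 : ℝ) ^ ((d : ℝ) / 2) :=
  john_quotient_bound_centrally_symmetric_general d hd Q hQconv hQopen hQbdd hQsymm
end
end
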